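/- Let σ be a density matrix on ℂ^m ⊗ ℂ^n such that the partial trace tr_A σ is a pure state, i.e. tr_A σ = ψψ* for some unit vector ψ ∈ ℂ^n. Then σ = (tr_B σ) ⊗ (tr_A σ). (A bipartite state with a pure marginal is the product of its marginals.) -/

import Mathlib

open Matrix Kronecker BigOperators ComplexOrder

noncomputable section

/-- Partial trace over the second factor. -/
def trB {m n : ℕ} (ρ : Matrix (Fin m × Fin n) (Fin m × Fin n) ℂ) :
    Matrix (Fin m) (Fin m) ℂ :=
  fun i j => ∑ k : Fin n, ρ (i, k) (j, k)

/-- Partial trace over the first factor. -/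
def trA {m n : ℕ} (ρ : Matrix (Fin m × Fin n) (Fin m × Fin n) ℂ) :
    Matrix (Fin n) (Fin n) ℂ :=
  fun k l => ∑ i : Fin m, ρ (i, k) (i, l)

/-- A density matrix: positive semidefinite with trace 1. -/
def IsDensityMatrix {d : Type*} [Fintype d] [DecidableEq d] (ρ : Matrix d d ℂ) : Prop :=
  ρ.PosSemidef ∧ ρ.trace = 1

/-- An orthonormal basis of ℂ^m, given as a family of m vectors. -/
def IsONB {m : ℕ} (e : Fin m → Fin m → ℂ) : Prop :=
  ∀ i j, star (e i) ⬝ᵥ e j = if i = j then 1 else 0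

/-- The rank-one matrix v v*, with entries v j * conj (v k). -/
def proj {m : ℕ} (v : Fin m → ℂ) : Matrix (Fin m) (Fin m) ℂ :=
  vecMulVec v (star v)

/-- A classical-quantum (zero-discord) state: ρ = ∑ i (eᵢ eᵢ*) ⊗ σᵢ for an
orthonormal basis e of ℂ^m and positive semidefinite σᵢ. -/
def ClassicalQuantum {m n : ℕ} (ρ : Matrix (Fin m × Fin n) (Fin m × Fin n) ℂ) : Prop :=
  ∃ e : Fin m → Fin m → ℂ, IsONB e ∧
    ∃ σ : Fin m → Matrix (Fin n) (Fin n) ℂ,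
      (∀ i, (σ i).PosSemidef) ∧ ρ = ∑ i, proj (e i) ⊗ₖ σ i

/-- A pure state: ρ = ψψ* for a unit vector ψ. -/
def IsPure {d : ℕ} (ρ : Matrix (Fin d) (Fin d) ℂ) : Prop :=
  ∃ ψ : Fin d → ℂ, star ψ ⬝ᵥ ψ = 1 ∧ ρ = vecMulVec ψ (star ψ)

/-!
Write `P = ψψ*`. Because `tr_A σ = P`, the compression `(1 ⊗ (1 - P)) σ (1 ⊗ (1 - P))` is
positive semidefinite with trace `tr (P (1 - P)) = 0`, hence zero, and positivity of `σ` upgrades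
this to `σ (1 ⊗ (1 - P)) = 0`. Together with hermiticity, `σ = (1 ⊗ P) σ (1 ⊗ P) = τ ⊗ P` for the
partial compression `τ = (1 ⊗ ψ*) σ (1 ⊗ ψ)`, and taking `tr_B` of this identity gives `τ = tr_B σ`.
-/

open scoped MatrixOrder

namespace Matrix

variable {𝕜 : Type*} [RCLike 𝕜] {ι κ : Type*} [Fintype ι]

lemma PosSemidef.mul_eq_zero_of_conjTranspose_mul_mul_eq_zero {A : Matrix ι ι 𝕜}
    (hA : A.PosSemidef) {Q : Matrix ι κ 𝕜} (h : Qᴴ * A * Q = 0) : A * Q = 0 := by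
  classical
  obtain ⟨B, rfl⟩ := CStarAlgebra.nonneg_iff_eq_star_mul_self.mp hA.nonneg
  have hBQ : B * Q = 0 := by
    rw [← conjTranspose_mul_self_eq_zero, conjTranspose_mul]
    simpa only [star_eq_conjTranspose, Matrix.mul_assoc] using h
  rw [Matrix.mul_assoc, hBQ, Matrix.mul_zero]

lemma PosSemidef.mul_eq_zero_of_trace_mul_eq_zero {A Q : Matrix ι ι 𝕜} (hA : A.PosSemidef)
    (hQ : Q.IsHermitian) (hQQ : Q * Q = Q) (h : (A * Q).trace = 0) : A * Q = 0 := by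
  refine hA.mul_eq_zero_of_conjTranspose_mul_mul_eq_zero ?_
  rw [← (hA.conjTranspose_mul_mul_same Q).trace_eq_zero_iff, trace_mul_cycle, hQ.eq, hQQ,
    trace_mul_comm, h]

section Proj

variable {n : ℕ} {ψ : Fin n → ℂ}

lemma isHermitian_proj (ψ : Fin n → ℂ) : (proj ψ).IsHermitian := by
  simp [IsHermitian, proj]

lemma proj_mul_proj (hψ : star ψ ⬝ᵥ ψ = 1) : proj ψ * proj ψ = proj ψ := by
  rw [proj, vecMulVec_mul_vecMulVec, hψ, one_smul]

lemma trace_proj (hψ : star ψ ⬝ᵥ ψ = 1) : (proj ψ).trace = 1 := by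
  rw [proj, trace_vecMulVec, dotProduct_comm, hψ]

end Proj

section PartialTrace

variable {m n : ℕ}

lemma trace_mul_one_kronecker (ρ : Matrix (Fin m × Fin n) (Fin m × Fin n) ℂ)
    (B : Matrix (Fin n) (Fin n) ℂ) : (ρ * (1 ⊗ₖ B)).trace = (trA ρ * B).trace := by
  simp only [trace, diag, mul_apply, kronecker_apply, one_apply, trA, Fintype.sum_prod_type,
    ite_mul, one_mul, zero_mul, mul_ite, mul_zero, Finset.sum_mul]
  simp [Finset.sum_comm (γ := Fin m)]

lemma trB_kronecker (τ : Matrix (Fin m) (Fin m) ℂ) (B : Matrix (Fin n) (Fin n) ℂ) :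
    trB (τ ⊗ₖ B) = B.trace • τ := by
  ext i j
  simp [trB, trace, Finset.mul_sum, mul_comm]

def compressB (ψ : Fin n → ℂ) (ρ : Matrix (Fin m × Fin n) (Fin m × Fin n) ℂ) :
    Matrix (Fin m) (Fin m) ℂ :=
  fun i j => ∑ k, ∑ l, star (ψ k) * ρ (i, k) (j, l) * ψ l

lemma one_kronecker_proj_mul_mul_one_kronecker_proj (ψ : Fin n → ℂ)
    (ρ : Matrix (Fin m × Fin n) (Fin m × Fin n) ℂ) :
    (1 ⊗ₖ proj ψ) * ρ * (1 ⊗ₖ proj ψ) = compressB ψ ρ ⊗ₖ proj ψ := by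
  ext ⟨i, k⟩ ⟨j, l⟩
  simp [mul_apply, one_apply, proj, vecMulVec_apply, compressB,
    Fintype.sum_prod_type, Finset.sum_mul]
  rw [Finset.sum_comm]
  exact Finset.sum_congr rfl fun _ _ ↦ Finset.sum_congr rfl fun _ _ ↦ by ring

end PartialTrace

lemma PosSemidef.mul_one_kronecker_proj_eq_self_of_trA_eq_proj {m n : ℕ}
    {σ : Matrix (Fin m × Fin n) (Fin m × Fin n) ℂ} (hσ : σ.PosSemidef) {ψ : Fin n → ℂ}
    (hψ : star ψ ⬝ᵥ ψ = 1) (hA : trA σ = proj ψ) : σ * (1 ⊗ₖ proj ψ) = σ := by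
  set Q : Matrix (Fin m × Fin n) (Fin m × Fin n) ℂ := 1 ⊗ₖ (1 - proj ψ)
  have hQ : Q.IsHermitian := by
    simp [Q, IsHermitian, conjTranspose_kronecker, (isHermitian_proj ψ).eq]
  have hQQ : Q * Q = Q := by
    rw [← mul_kronecker_mul, Matrix.mul_one]
    simp [Q, sub_mul, mul_sub, proj_mul_proj hψ]
  have hσQ : σ * Q = 0 := by
    refine hσ.mul_eq_zero_of_trace_mul_eq_zero hQ hQQ ?_
    rw [trace_mul_one_kronecker, hA, mul_sub, proj_mul_proj hψ, Matrix.mul_one, sub_self,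
      trace_zero]
  calc σ * (1 ⊗ₖ proj ψ) = σ * (1 ⊗ₖ proj ψ) + σ * Q := by rw [hσQ, add_zero]
    _ = σ := by rw [← Matrix.mul_add, ← kronecker_add, add_sub_cancel, one_kronecker_one,
      Matrix.mul_one]

end Matrix

theorem stmt5 {m n : ℕ} (σ : Matrix (Fin m × Fin n) (Fin m × Fin n) ℂ)
    (hσ : IsDensityMatrix σ)
    (hpure : ∃ ψ : Fin n → ℂ, star ψ ⬝ᵥ ψ = 1 ∧ trA σ = vecMulVec ψ (star ψ)) :
    σ = trB σ ⊗ₖ trA σ := by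
  obtain ⟨ψ, hψ, hA⟩ := hpure
  change trA σ = proj ψ at hA
  have hright : σ * (1 ⊗ₖ proj ψ) = σ :=
    hσ.1.mul_one_kronecker_proj_eq_self_of_trA_eq_proj hψ hA
  have hleft : (1 ⊗ₖ proj ψ) * σ = σ := by
    simpa [conjTranspose_kronecker, (isHermitian_proj ψ).eq, hσ.1.isHermitian.eq] using
      congrArg conjTranspose hright
  have hfactor : σ = compressB ψ σ ⊗ₖ proj ψ := by
    rw [← one_kronecker_proj_mul_mul_one_kronecker_proj, hleft, hright]
  have htrB : trB σ = compressB ψ σ := by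
    conv_lhs => rw [hfactor]
    rw [trB_kronecker, trace_proj hψ, one_smul]
  rw [hA, htrB]
  exact hfactor
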